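/- (Wigner classification, completeness.) Let (G, φ) be a finite magnetic group with G₀ = ker φ, let a ∈ G ∖ G₀, and let ρ be an irreducible magnetic representation of (G, φ) on ℂⁿ. If the restriction of ρ to G₀ is not irreducible as a classical representation, then there exists a ℂ-linear subspace U ⊆ ℂⁿ with ρ(g)·U ⊆ U for all g ∈ G₀, which is irreducible for G₀ (U ≠ 0 and the only ℂ-subspaces of U stable under all ρ(g), g ∈ G₀, are 0 and U), such that ℂⁿ is the internal direct sum of U and the subspace a·U = {ρ(a)·σ(u) : u ∈ U}. -/
import Mathlib


open Matrix

noncomputable section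

/-- Entrywise complex conjugation of a complex matrix. -/
def conjMat {m n : ℕ} (M : Matrix (Fin m) (Fin n) ℂ) : Matrix (Fin m) (Fin n) ℂ :=
  M.map (starRingEnd ℂ)

/-- Entrywise complex conjugation of a vector in `ℂⁿ`. -/
def conjVec {n : ℕ} (v : Fin n → ℂ) : Fin n → ℂ :=
  fun i => starRingEnd ℂ (v i)

/-- `σ^ε` on matrices, for `ε : ℤ/2` (written multiplicatively). -/
def sigmaPow {m n : ℕ} (ε : Multiplicative (ZMod 2)) (M : Matrix (Fin m) (Fin n) ℂ) :
    Matrix (Fin m) (Fin n) ℂ :=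
  if ε = 1 then M else conjMat M

/-- `σ^ε` on vectors. -/
def sigmaPowVec {n : ℕ} (ε : Multiplicative (ZMod 2)) (v : Fin n → ℂ) : Fin n → ℂ :=
  if ε = 1 then v else conjVec v

/-- A magnetic representation of the magnetic group `(G, φ)` on `ℂⁿ`:
`ρ (g * h) = ρ g * σ^(φ g) (ρ h)`. -/
def IsMagneticRep {G : Type*} [Group G] (φ : G →* Multiplicative (ZMod 2)) {n : ℕ}
    (ρ : G → Matrix.GeneralLinearGroup (Fin n) ℂ) : Prop :=
  ∀ g h : G, (ρ (g * h) : Matrix (Fin n) (Fin n) ℂ) =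
    (ρ g : Matrix (Fin n) (Fin n) ℂ) * sigmaPow (φ g) (ρ h : Matrix (Fin n) (Fin n) ℂ)

/-- A morphism of magnetic representations from `ρ₁` to `ρ₂`. -/
def IsMagMorphism {G : Type*} [Group G] (φ : G →* Multiplicative (ZMod 2)) {n m : ℕ}
    (ρ₁ : G → Matrix.GeneralLinearGroup (Fin n) ℂ)
    (ρ₂ : G → Matrix.GeneralLinearGroup (Fin m) ℂ)
    (T : Matrix (Fin m) (Fin n) ℂ) : Prop :=
  ∀ g : G, T * (ρ₁ g : Matrix (Fin n) (Fin n) ℂ) =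
    (ρ₂ g : Matrix (Fin m) (Fin m) ℂ) * sigmaPow (φ g) T

/-- A `ℂ`-subspace invariant under a magnetic representation. -/
def MagInvariant {G : Type*} [Group G] (φ : G →* Multiplicative (ZMod 2)) {n : ℕ}
    (ρ : G → Matrix.GeneralLinearGroup (Fin n) ℂ) (W : Submodule ℂ (Fin n → ℂ)) : Prop :=
  ∀ g : G, ∀ w ∈ W, (ρ g : Matrix (Fin n) (Fin n) ℂ).mulVec (sigmaPowVec (φ g) w) ∈ W

/-- An irreducible magnetic representation. -/
def IsIrredMagRep {G : Type*} [Group G] (φ : G →* Multiplicative (ZMod 2)) {n : ℕ}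
    (ρ : G → Matrix.GeneralLinearGroup (Fin n) ℂ) : Prop :=
  (⊥ : Submodule ℂ (Fin n → ℂ)) ≠ ⊤ ∧
    ∀ W : Submodule ℂ (Fin n → ℂ), MagInvariant φ ρ W → W = ⊥ ∨ W = ⊤

/-- Irreducibility of a classical (complex linear) representation given by
a family of invertible matrices. -/
def IsClassIrreducible {H : Type*} {n : ℕ}
    (ρ : H → Matrix.GeneralLinearGroup (Fin n) ℂ) : Prop :=
  (⊥ : Submodule ℂ (Fin n → ℂ)) ≠ ⊤ ∧
    ∀ W : Submodule ℂ (Fin n → ℂ),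
      (∀ h : H, ∀ w ∈ W, (ρ h : Matrix (Fin n) (Fin n) ℂ).mulVec w ∈ W) → W = ⊥ ∨ W = ⊤

theorem sq_mem {G : Type*} [Group G] (φ : G →* Multiplicative (ZMod 2)) (a : G) :
    a * a ∈ φ.ker := by
  have h2 : ∀ x : Multiplicative (ZMod 2), x * x = 1 := by decide
  simp [MonoidHom.mem_ker, _root_.map_mul, h2]

/-- `g ↦ a⁻¹ g a` as a map `G₀ → G₀` for `G₀ = ker φ`. -/
def kerConj {G : Type*} [Group G] (φ : G →* Multiplicative (ZMod 2)) (a : G) (g : φ.ker) :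
    φ.ker :=
  ⟨a⁻¹ * g * a, by
    have hg : φ g = 1 := g.2
    simp [MonoidHom.mem_ker, _root_.map_mul, map_inv, hg]⟩

/-- Entrywise conjugation as a map `GL(n, ℂ) → GL(n, ℂ)`. -/
def conjGL {n : ℕ} (A : Matrix.GeneralLinearGroup (Fin n) ℂ) :
    Matrix.GeneralLinearGroup (Fin n) ℂ :=
  Units.map (RingHom.toMonoidHom (RingHom.mapMatrix (starRingEnd ℂ))) A

theorem conjGL_conjGL {n : ℕ} (A : Matrix.GeneralLinearGroup (Fin n) ℂ) :
    conjGL (conjGL A) = A := by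
  apply Units.ext
  ext i j
  simp [conjGL]

theorem conjMat_mul {l m n : ℕ} (M : Matrix (Fin l) (Fin m) ℂ) (N : Matrix (Fin m) (Fin n) ℂ) :
    conjMat (M * N) = conjMat M * conjMat N := by
  ext i j
  simp [conjMat, Matrix.mul_apply, map_sum]

theorem conjMat_add {m n : ℕ} (M N : Matrix (Fin m) (Fin n) ℂ) :
    conjMat (M + N) = conjMat M + conjMat N := by
  ext i j
  simp [conjMat]

theorem sigmaPow_mul {l m n : ℕ} (ε : Multiplicative (ZMod 2))
    (M : Matrix (Fin l) (Fin m) ℂ) (N : Matrix (Fin m) (Fin n) ℂ) :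
    sigmaPow ε (M * N) = sigmaPow ε M * sigmaPow ε N := by
  unfold sigmaPow
  split
  · rfl
  · exact conjMat_mul M N

theorem sigmaPow_add {m n : ℕ} (ε : Multiplicative (ZMod 2))
    (M N : Matrix (Fin m) (Fin n) ℂ) :
    sigmaPow ε (M + N) = sigmaPow ε M + sigmaPow ε N := by
  unfold sigmaPow
  split
  · rfl
  · exact conjMat_add M N

/-- The `ℝ`-algebra of endomorphisms of a magnetic representation. -/
def MagEnd {G : Type*} [Group G] (φ : G →* Multiplicative (ZMod 2)) {n : ℕ}
    (ρ : G → Matrix.GeneralLinearGroup (Fin n) ℂ) :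
    Subalgebra ℝ (Matrix (Fin n) (Fin n) ℂ) where
  carrier := {T | ∀ g : G, T * (ρ g : Matrix (Fin n) (Fin n) ℂ) =
      (ρ g : Matrix (Fin n) (Fin n) ℂ) * sigmaPow (φ g) T}
  mul_mem' := by
    intro T S hT hS g
    rw [mul_assoc, hS g, ← mul_assoc, hT g, mul_assoc, sigmaPow_mul]
  add_mem' := by
    intro T S hT hS g
    rw [add_mul, hT g, hS g, sigmaPow_add, mul_add]
  algebraMap_mem' := by
    intro r g
    have hσ : sigmaPow (φ g) (algebraMap ℝ (Matrix (Fin n) (Fin n) ℂ) r) =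
        algebraMap ℝ (Matrix (Fin n) (Fin n) ℂ) r := by
      unfold sigmaPow conjMat
      split
      · rfl
      · ext i j
        simp [Matrix.algebraMap_matrix_apply, apply_ite (starRingEnd ℂ)]
    rw [hσ, Algebra.commutes]

/-- `(n+n) × (n+n)` block matrix built out of four `n × n` blocks. -/
def blocks {n : ℕ} (A B C D : Matrix (Fin n) (Fin n) ℂ) :
    Matrix (Fin (n + n)) (Fin (n + n)) ℂ :=
  Matrix.reindex finSumFinEquiv finSumFinEquiv (Matrix.fromBlocks A B C D)

/-- The matrix of the inclusion `ℂⁿ → ℂ^{n+n}` of the first block. -/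
def iotaMat (n : ℕ) : Matrix (Fin (n + n)) (Fin n) ℂ :=
  Matrix.reindex finSumFinEquiv (Equiv.refl (Fin n))
    (Matrix.fromRows (1 : Matrix (Fin n) (Fin n) ℂ) (0 : Matrix (Fin n) (Fin n) ℂ))



section Helpers

lemma conjVec_conjVec {n : ℕ} (v : Fin n → ℂ) : conjVec (conjVec v) = v := by
  ext i; simp [conjVec]

lemma conjVec_add {n : ℕ} (u v : Fin n → ℂ) : conjVec (u + v) = conjVec u + conjVec v := by
  ext i; simp [conjVec]

lemma conjVec_smul {n : ℕ} (c : ℂ) (v : Fin n → ℂ) :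
    conjVec (c • v) = (starRingEnd ℂ c) • conjVec v := by
  ext i; simp [conjVec]

lemma conjMat_mulVec {n : ℕ} (M : Matrix (Fin n) (Fin n) ℂ) (v : Fin n → ℂ) :
    (conjMat M).mulVec (conjVec v) = conjVec (M.mulVec v) := by
  ext i
  simp [conjMat, conjVec, Matrix.mulVec, dotProduct, map_sum]

lemma sigmaPow_one {m k : ℕ} (M : Matrix (Fin m) (Fin k) ℂ) : sigmaPow 1 M = M := if_pos rfl

lemma sigmaPow_of_ne {m k : ℕ} {ε : Multiplicative (ZMod 2)} (h : ε ≠ 1)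
    (M : Matrix (Fin m) (Fin k) ℂ) : sigmaPow ε M = conjMat M := if_neg h

lemma sigmaPowVec_one {k : ℕ} (v : Fin k → ℂ) : sigmaPowVec 1 v = v := if_pos rfl

lemma sigmaPowVec_of_ne {k : ℕ} {ε : Multiplicative (ZMod 2)} (h : ε ≠ 1)
    (v : Fin k → ℂ) : sigmaPowVec ε v = conjVec v := if_neg h

/-- The conjugate-linear map `v ↦ A ⬝ conj v`. -/
def aMap {n : ℕ} (A : Matrix (Fin n) (Fin n) ℂ) :
    (Fin n → ℂ) →ₛₗ[starRingEnd ℂ] (Fin n → ℂ) where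
  toFun v := A.mulVec (conjVec v)
  map_add' u v := by
    show A.mulVec (conjVec (u + v)) = A.mulVec (conjVec u) + A.mulVec (conjVec v)
    rw [conjVec_add, Matrix.mulVec_add]
  map_smul' c v := by
    show A.mulVec (conjVec (c • v)) = (starRingEnd ℂ) c • A.mulVec (conjVec v)
    rw [conjVec_smul, Matrix.mulVec_smul]

lemma aMap_apply {n : ℕ} (A : Matrix (Fin n) (Fin n) ℂ) (v : Fin n → ℂ) :
    aMap A v = A.mulVec (conjVec v) := rfl

lemma zmod2_mul_inv {x y : Multiplicative (ZMod 2)} (hx : x ≠ 1) (hy : y ≠ 1) :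
    x * y⁻¹ = 1 := by revert hx hy; revert x y; decide

end Helpers

theorem stmt18 {G : Type*} [Group G] [Finite G]
    (φ : G →* Multiplicative (ZMod 2)) (hφ : Function.Surjective φ)
    (a : G) (ha : a ∉ φ.ker) {n : ℕ}
    (ρ : G → Matrix.GeneralLinearGroup (Fin n) ℂ) (hρ : IsMagneticRep φ ρ)
    (hirr : IsIrredMagRep φ ρ)
    (hnot : ¬IsClassIrreducible fun g : φ.ker => ρ g) :
    ∃ U : Submodule ℂ (Fin n → ℂ),
      (∀ g : φ.ker, ∀ u ∈ U, (ρ g : Matrix (Fin n) (Fin n) ℂ).mulVec u ∈ U) ∧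
      U ≠ ⊥ ∧
      (∀ W : Submodule ℂ (Fin n → ℂ), W ≤ U →
        (∀ g : φ.ker, ∀ w ∈ W, (ρ g : Matrix (Fin n) (Fin n) ℂ).mulVec w ∈ W) →
        W = ⊥ ∨ W = U) ∧
      ∃ U' : Submodule ℂ (Fin n → ℂ),
        (U' : Set (Fin n → ℂ)) =
          (fun u => (ρ a : Matrix (Fin n) (Fin n) ℂ).mulVec (conjVec u)) '' (U : Set (Fin n → ℂ)) ∧
        U ⊓ U' = ⊥ ∧ U ⊔ U' = ⊤ := by

  classical
  -- φ a ≠ 1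
  have hφa : φ a ≠ 1 := fun h => ha h
  -- basic multiplicativity facts
  have hmulker : ∀ g : G, φ g = 1 → ∀ h : G,
      (ρ (g * h) : Matrix (Fin n) (Fin n) ℂ) = (ρ g : Matrix (Fin n) (Fin n) ℂ) * ρ h := by
    intro g hg h
    rw [hρ g h, hg, sigmaPow_one]
  -- key identity A: for g ∈ ker, ρ g * ρ a = ρ a * conj (ρ (a⁻¹ g a))
  have keyA : ∀ g : G, φ g = 1 →
      (ρ g : Matrix (Fin n) (Fin n) ℂ) * (ρ a : Matrix (Fin n) (Fin n) ℂ) =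
        (ρ a : Matrix (Fin n) (Fin n) ℂ) *
          conjMat (ρ (a⁻¹ * g * a) : Matrix (Fin n) (Fin n) ℂ) := by
    intro g hg
    have h1 : (ρ (g * a) : Matrix (Fin n) (Fin n) ℂ) =
        (ρ g : Matrix (Fin n) (Fin n) ℂ) * (ρ a : Matrix (Fin n) (Fin n) ℂ) :=
      hmulker g hg a
    have h2 : (ρ (a * (a⁻¹ * g * a)) : Matrix (Fin n) (Fin n) ℂ) =
        (ρ a : Matrix (Fin n) (Fin n) ℂ) *
          conjMat (ρ (a⁻¹ * g * a) : Matrix (Fin n) (Fin n) ℂ) := by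
      rw [hρ a (a⁻¹ * g * a), sigmaPow_of_ne hφa]
    have h3 : a * (a⁻¹ * g * a) = g * a := by group
    rw [← h1, ← h3, h2]
  -- key identity B: ρ a * conj (ρ a) = ρ (a * a)
  have keyB : (ρ (a * a) : Matrix (Fin n) (Fin n) ℂ) =
      (ρ a : Matrix (Fin n) (Fin n) ℂ) * conjMat (ρ a : Matrix (Fin n) (Fin n) ℂ) := by
    rw [hρ a a, sigmaPow_of_ne hφa]
  -- the conjugate-linear map f = aMap (ρ a)
  set A : Matrix (Fin n) (Fin n) ℂ := (ρ a : Matrix (Fin n) (Fin n) ℂ) with hA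
  -- vector-level: for g ∈ ker,  ρ g ⬝ f u = f (ρ (a⁻¹ g a) ⬝ u)
  have vecA : ∀ g : G, φ g = 1 → ∀ u : Fin n → ℂ,
      (ρ g : Matrix (Fin n) (Fin n) ℂ).mulVec (aMap A u) =
        aMap A ((ρ (a⁻¹ * g * a) : Matrix (Fin n) (Fin n) ℂ).mulVec u) := by
    intro g hg u
    rw [aMap_apply, aMap_apply, Matrix.mulVec_mulVec, keyA g hg, ← Matrix.mulVec_mulVec,
      conjMat_mulVec]
  -- vector-level: f (f u) = ρ (a*a) ⬝ u
  have vecB : ∀ u : Fin n → ℂ, aMap A (aMap A u) =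
      (ρ (a * a) : Matrix (Fin n) (Fin n) ℂ).mulVec u := by
    intro u
    rw [aMap_apply, aMap_apply, ← conjMat_mulVec, conjVec_conjVec, Matrix.mulVec_mulVec, keyB]
  -- the set of nonzero G₀-invariant subspaces
  set S : Set (Submodule ℂ (Fin n → ℂ)) :=
    {W | W ≠ ⊥ ∧ ∀ g : φ.ker, ∀ w ∈ W, ((ρ (g : G) : Matrix (Fin n) (Fin n) ℂ)).mulVec w ∈ W}
    with hS
  obtain ⟨W0, hW0inv, hW0bot, hW0top⟩ :
      ∃ W : Submodule ℂ (Fin n → ℂ),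
        (∀ g : φ.ker, ∀ w ∈ W, ((ρ (g : G) : Matrix (Fin n) (Fin n) ℂ)).mulVec w ∈ W) ∧
        W ≠ ⊥ ∧ W ≠ ⊤ := by
    by_contra hcon
    push_neg at hcon
    exact hnot ⟨hirr.1, fun W hW => by
      by_cases hb : W = ⊥
      · exact Or.inl hb
      · exact Or.inr (hcon W hW hb)⟩
  have hSne : S.Nonempty := ⟨W0, hW0bot, hW0inv⟩
  obtain ⟨U, hUS, hUmin⟩ := wellFounded_lt.has_min S hSne
  obtain ⟨hUbot, hUinv⟩ := hUS
  -- minimality restated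
  have hUminimal : ∀ W : Submodule ℂ (Fin n → ℂ), W ≤ U →
      (∀ g : φ.ker, ∀ w ∈ W, ((ρ (g : G) : Matrix (Fin n) (Fin n) ℂ)).mulVec w ∈ W) →
      W = ⊥ ∨ W = U := by
    intro W hWU hWinv
    by_cases hb : W = ⊥
    · exact Or.inl hb
    · right
      by_contra hne
      exact hUmin W ⟨hb, hWinv⟩ (lt_of_le_of_ne hWU hne)
  -- U ≠ ⊤
  have hUtop : U ≠ ⊤ := by
    intro h
    rcases hUminimal W0 (h ▸ le_top) hW0inv with h1 | h1
    · exact hW0bot h1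
    · exact hW0top (h1.trans h)
  -- define U' = f(U)
  set U' : Submodule ℂ (Fin n → ℂ) := Submodule.map (aMap A) U with hU'
  -- U' is G₀-invariant
  have hU'inv : ∀ g : φ.ker, ∀ w ∈ U', ((ρ (g : G) : Matrix (Fin n) (Fin n) ℂ)).mulVec w ∈ U' := by
    rintro g w hw
    obtain ⟨u, hu, rfl⟩ := hw
    rw [vecA (g : G) g.2]
    refine ⟨_, ?_, rfl⟩
    have hg' : (a⁻¹ * (g : G) * a) ∈ φ.ker := (kerConj φ a g).2
    exact hUinv ⟨_, hg'⟩ u hu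
  -- f maps U' into U
  have hffU : ∀ w ∈ U', aMap A w ∈ U := by
    rintro w ⟨u, hu, rfl⟩
    rw [vecB]
    exact hUinv ⟨a * a, sq_mem φ a⟩ u hu
  -- W := U ⊔ U' is magnetically invariant
  have hsupinv : MagInvariant φ ρ (U ⊔ U') := by
    intro g w hw
    obtain ⟨x, hx, y, hy, rfl⟩ := Submodule.mem_sup.mp hw
    by_cases hg : φ g = 1
    · rw [hg, sigmaPowVec_one, Matrix.mulVec_add]
      exact Submodule.add_mem _ (Submodule.mem_sup_left (hUinv ⟨g, hg⟩ x hx))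
        (Submodule.mem_sup_right (hU'inv ⟨g, hg⟩ y hy))
    · rw [sigmaPowVec_of_ne hg, conjVec_add, Matrix.mulVec_add]
      have hga : φ (g * a⁻¹) = 1 := by
        rw [_root_.map_mul, _root_.map_inv]; exact zmod2_mul_inv hg hφa
      have hdec : (ρ g : Matrix (Fin n) (Fin n) ℂ) =
          (ρ (g * a⁻¹) : Matrix (Fin n) (Fin n) ℂ) * (ρ a : Matrix (Fin n) (Fin n) ℂ) := by
        have := hmulker (g * a⁻¹) hga a
        rwa [inv_mul_cancel_right] at this
      have hact : ∀ v : Fin n → ℂ, (ρ g : Matrix (Fin n) (Fin n) ℂ).mulVec (conjVec v) =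
          (ρ (g * a⁻¹) : Matrix (Fin n) (Fin n) ℂ).mulVec (aMap A v) := by
        intro v
        rw [hdec, ← Matrix.mulVec_mulVec, aMap_apply]
      rw [hact x, hact y]
      refine Submodule.add_mem _ (Submodule.mem_sup_right ?_) (Submodule.mem_sup_left ?_)
      · exact hU'inv ⟨g * a⁻¹, hga⟩ _ ⟨x, hx, rfl⟩
      · exact hUinv ⟨g * a⁻¹, hga⟩ _ (hffU y hy)
  -- by magnetic irreducibility, U ⊔ U' = ⊤
  have hsup : U ⊔ U' = ⊤ := by
    rcases hirr.2 (U ⊔ U') hsupinv with h | h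
    · exact absurd (le_bot_iff.mp (h ▸ le_sup_left : U ≤ ⊥)) hUbot
    · exact h
  -- U ⊓ U' is G₀-invariant
  have hinfinv : ∀ g : φ.ker, ∀ w ∈ U ⊓ U',
      ((ρ (g : G) : Matrix (Fin n) (Fin n) ℂ)).mulVec w ∈ U ⊓ U' := by
    intro g w hw
    exact ⟨hUinv g w hw.1, hU'inv g w hw.2⟩
  -- U ⊓ U' = ⊥
  have hinf : U ⊓ U' = ⊥ := by
    rcases hUminimal (U ⊓ U') inf_le_left hinfinv with h | h
    · exact h
    · -- then U ≤ U', hence U' ≤ U (apply f), so U = U' = ⊤, contradiction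
      exfalso
      have hle : U ≤ U' := by
        intro u hu
        have hm : u ∈ U ⊓ U' := by rw [h]; exact hu
        exact hm.2
      have hle' : U' ≤ U := by
        rintro w ⟨u, hu, rfl⟩
        exact hffU u (hle hu)
      have : U = ⊤ := by
        have : U ⊔ U' = U := sup_eq_left.mpr hle'
        rw [this] at hsup
        exact hsup
      exact hUtop this
  refine ⟨U, hUinv, hUbot, hUminimal, U', ?_, hinf, hsup⟩
  rw [hU', Submodule.map_coe]
  rfl
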